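/- arXiv:2407.17763 — 6 statements merged into one kernel-verified Lean document; each statement's English description precedes it below -/
import Mathlib

section
/- Let (aₙ)_{n≥0} be a sequence of real numbers, let B ≥ 0, and set αₙ = min(1, 2/n) for n ≥ 1. If aₙ ≤ (1 − αₙ)·a_{n−1} + 2αₙ²·B for every n ≥ 1, then aₙ ≤ 8B/n for every n ≥ 1. -/
/-- The inductive recursion used in the convergence proof of the weak relaxed greedy
algorithm: if `aₙ ≤ (1 - αₙ) a_{n-1} + 2 αₙ² B` with `αₙ = min(1, 2/n)` and `B ≥ 0`,
then `aₙ ≤ 8B/n` for all `n ≥ 1`. -/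
theorem stmt3 (a : ℕ → ℝ) (B : ℝ) (hB : 0 ≤ B)
    (α : ℕ → ℝ) (hα : ∀ n : ℕ, α n = min 1 (2 / (n : ℝ)))
    (hrec : ∀ n : ℕ, 1 ≤ n → a n ≤ (1 - α n) * a (n - 1) + 2 * (α n) ^ 2 * B) :
    ∀ n : ℕ, 1 ≤ n → a n ≤ 8 * B / n := by
  intro n
  induction n with
  | zero => intro h; omega
  | succ m ih =>
    intro _
    match m, ih with
    | 0, _ =>
      have h := hrec 1 le_rfl
      have hα1 : α 1 = 1 := by rw [hα]; norm_num
      rw [hα1] at h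
      norm_num at h ⊢
      linarith
    | 1, _ =>
      have h := hrec 2 (by norm_num)
      have hα2 : α 2 = 1 := by rw [hα]; norm_num
      rw [hα2] at h
      norm_num at h ⊢
      linarith
    | (k+2), ih =>
      have hnat : k + 2 + 1 = k + 3 := by omega
      rw [hnat]
      have ihk := ih (by omega)
      have h := hrec (k+3) (by omega)
      have hαn : α (k+3) = 2 / ((k:ℝ)+3) := by
        rw [hα]
        push_cast
        rw [min_eq_right]
        rw [div_le_one (by positivity)]
        linarith
      push_cast at h ihk ⊢
      rw [hαn] at h
      norm_num at h
      have hk2 : (0:ℝ) < (k:ℝ)+2 := by positivity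
      have hk3 : (0:ℝ) < (k:ℝ)+3 := by positivity
      have hmono : (1 - 2/((k:ℝ)+3)) * a (k+2) ≤ (1 - 2/((k:ℝ)+3)) * (8*B/((k:ℝ)+2)) := by
        apply mul_le_mul_of_nonneg_left ihk
        have : 2/((k:ℝ)+3) ≤ 1 := by rw [div_le_one hk3]; linarith
        linarith
      have hfrac : ((k:ℝ)+1)/(((k:ℝ)+3)*((k:ℝ)+2)) + 1/((k:ℝ)+3)^2 ≤ 1/((k:ℝ)+3) := by
        rw [div_add_div _ _ (by positivity) (by positivity),
          div_le_div_iff₀ (by positivity) hk3]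
        nlinarith
      have key : (1 - 2/((k:ℝ)+3)) * (8*B/((k:ℝ)+2)) + 2 * (2/((k:ℝ)+3))^2 * B
          ≤ 8*B/((k:ℝ)+3) := by
        calc (1 - 2/((k:ℝ)+3)) * (8*B/((k:ℝ)+2)) + 2 * (2/((k:ℝ)+3))^2 * B
            = 8*B*(((k:ℝ)+1)/(((k:ℝ)+3)*((k:ℝ)+2)) + 1/((k:ℝ)+3)^2) := by
              field_simp; ring
          _ ≤ 8*B*(1/((k:ℝ)+3)) := by
              exact mul_le_mul_of_nonneg_left hfrac (by positivity)
          _ = 8*B/((k:ℝ)+3) := by ring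
      have h' : a (k+3) ≤ (1 - 2/((k:ℝ)+3)) * a (k+2) + 2 * (2/((k:ℝ)+3))^2 * B := by
        nlinarith [h]
      linarith
end

section
/- Let d ≥ 2 and let S : ℝ^{d−1} → ℝ^d be the hyperspherical coordinate map defined by S(φ)ᵢ = (∏_{j=1}^{i−1} sin φⱼ)·cos φᵢ for 1 ≤ i ≤ d−1 and S(φ)_d = ∏_{j=1}^{d−1} sin φⱼ. Then S is nonexpansive on the domain [0,π]^{d−2} × [0,2π): for all φ, φ̂ in this domain, |S(φ) − S(φ̂)| ≤ |φ − φ̂|, where |·| denotes the Euclidean norm on ℝ^d and ℝ^{d−1}, respectively. -/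
open Real

/-- Extension of `φ : ℝ^{d-1}` (0-indexed angles) to a function on `ℕ`, by zero. -/
noncomputable def angleExt (d : ℕ) (φ : EuclideanSpace ℝ (Fin (d - 1))) (j : ℕ) : ℝ :=
  if h : j < d - 1 then φ ⟨j, h⟩ else 0

/-- The hyperspherical coordinate map `S : ℝ^{d-1} → ℝ^d`, defined (0-indexed) by
`S(φ)ᵢ = (∏_{j<i} sin φⱼ) cos φᵢ` for `i < d-1` and `S(φ)_{d-1} = ∏_{j<d-1} sin φⱼ`. -/
noncomputable def hyperS (d : ℕ) (φ : EuclideanSpace ℝ (Fin (d - 1))) :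
    EuclideanSpace ℝ (Fin d) :=
  (WithLp.equiv 2 (Fin d → ℝ)).symm fun i =>
    if (i : ℕ) < d - 1 then
      (∏ j ∈ Finset.range i, Real.sin (angleExt d φ j)) * Real.cos (angleExt d φ i)
    else
      ∏ j ∈ Finset.range (d - 1), Real.sin (angleExt d φ j)

/-- The domain `[0,π]^{d-2} × [0,2π)` of the hyperspherical coordinate map
(0-indexed: the first `d-2` angles lie in `[0,π]`, the last one in `[0,2π)`). -/
def inHyperDomain (d : ℕ) (φ : EuclideanSpace ℝ (Fin (d - 1))) : Prop :=
  ∀ i : Fin (d - 1),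
    if (i : ℕ) < d - 2 then φ i ∈ Set.Icc 0 Real.pi
    else φ i ∈ Set.Ico 0 (2 * Real.pi)

/-- Sequence-level version of the hyperspherical map. -/
noncomputable def sphT (n : ℕ) (f : ℕ → ℝ) (i : ℕ) : ℝ :=
  if i < n then (∏ j ∈ Finset.range i, Real.sin (f j)) * Real.cos (f i)
  else ∏ j ∈ Finset.range n, Real.sin (f j)

lemma sphT_zero (n : ℕ) (f : ℕ → ℝ) : sphT (n + 1) f 0 = Real.cos (f 0) := by
  simp [sphT]

lemma sphT_succ (n : ℕ) (f : ℕ → ℝ) (i : ℕ) :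
    sphT (n + 1) f (i + 1) = Real.sin (f 0) * sphT n (fun j => f (j + 1)) i := by
  unfold sphT
  rcases lt_or_ge i n with h | h
  · rw [if_pos (by omega), if_pos h, Finset.prod_range_succ', mul_comm _ (Real.sin (f 0)),
      mul_assoc]
  · rw [if_neg (by omega), if_neg (by omega), Finset.prod_range_succ',
      mul_comm _ (Real.sin (f 0))]

lemma sphT_norm (n : ℕ) (f : ℕ → ℝ) :
    ∑ i ∈ Finset.range (n + 1), (sphT n f i) ^ 2 = 1 := by
  induction n generalizing f with
  | zero => simp [sphT]
  | succ n ih =>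
      rw [Finset.sum_range_succ']
      simp only [sphT_succ, sphT_zero, mul_pow]
      rw [← Finset.mul_sum, ih]
      nlinarith [Real.sin_sq_add_cos_sq (f 0)]

lemma two_sub_two_cos (a b : ℝ) : 2 - 2 * Real.cos (a - b) ≤ (a - b) ^ 2 := by
  have h1 : Real.cos ((a - b) / 2) ^ 2 = 1 / 2 + Real.cos (a - b) / 2 := by
    have := Real.cos_sq ((a - b) / 2)
    rwa [show 2 * ((a - b) / 2) = a - b by ring] at this
  have h2 : Real.sin ((a - b) / 2) ^ 2 + Real.cos ((a - b) / 2) ^ 2 = 1 :=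
    Real.sin_sq_add_cos_sq _
  have h3 : |Real.sin ((a - b) / 2)| ≤ |(a - b) / 2| := Real.abs_sin_le_abs
  have h4 : Real.sin ((a - b) / 2) ^ 2 ≤ ((a - b) / 2) ^ 2 := by
    rw [← sq_abs, ← sq_abs ((a - b) / 2)]
    exact pow_le_pow_left₀ (abs_nonneg _) h3 2
  nlinarith

lemma sphT_lip (n : ℕ) (f g : ℕ → ℝ) :
    ∑ i ∈ Finset.range (n + 1), (sphT n f i - sphT n g i) ^ 2 ≤
      ∑ j ∈ Finset.range n, (f j - g j) ^ 2 := by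
  induction n generalizing f g with
  | zero => simp [sphT]
  | succ n ih =>
      rw [Finset.sum_range_succ']
      set a := Real.sin (f 0)
      set b := Real.sin (g 0)
      set u := sphT n (fun j => f (j + 1))
      set v := sphT n (fun j => g (j + 1))
      have key : ∀ i, (sphT (n + 1) f (i + 1) - sphT (n + 1) g (i + 1)) ^ 2 =
          a ^ 2 * (u i) ^ 2 + b ^ 2 * (v i) ^ 2 - 2 * (a * b) * (u i * v i) := by
        intro i
        rw [sphT_succ, sphT_succ]
        ring
      simp only [key, sphT_zero]
      rw [Finset.sum_sub_distrib, Finset.sum_add_distrib, ← Finset.mul_sum, ← Finset.mul_sum,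
        ← Finset.mul_sum, sphT_norm, sphT_norm]
      have hU : ∑ i ∈ Finset.range (n + 1), (u i - v i) ^ 2 =
          2 - 2 * ∑ i ∈ Finset.range (n + 1), u i * v i := by
        have : ∀ i, (u i - v i) ^ 2 = (u i) ^ 2 + (v i) ^ 2 - 2 * (u i * v i) := fun i => by ring
        simp only [this]
        rw [Finset.sum_sub_distrib, Finset.sum_add_distrib, ← Finset.mul_sum, sphT_norm, sphT_norm]
        ring
      have hIH : ∑ i ∈ Finset.range (n + 1), (u i - v i) ^ 2 ≤
          ∑ j ∈ Finset.range n, (f (j + 1) - g (j + 1)) ^ 2 := ih _ _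
      have hab : a * b ≤ 1 := by
        nlinarith [Real.neg_one_le_sin (f 0), Real.sin_le_one (f 0),
          Real.neg_one_le_sin (g 0), Real.sin_le_one (g 0)]
      have hUnn : (0 : ℝ) ≤ ∑ i ∈ Finset.range (n + 1), (u i - v i) ^ 2 :=
        Finset.sum_nonneg fun i _ => sq_nonneg _
      have hcos : (Real.cos (f 0) - Real.cos (g 0)) ^ 2 + (a - b) ^ 2 ≤ (f 0 - g 0) ^ 2 := by
        have hc := Real.cos_sub (f 0) (g 0)
        have h2 := two_sub_two_cos (f 0) (g 0)
        have hsf := Real.sin_sq_add_cos_sq (f 0)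
        have hsg := Real.sin_sq_add_cos_sq (g 0)
        nlinarith
      have hrhs : ∑ j ∈ Finset.range (n + 1), (f j - g j) ^ 2 =
          (f 0 - g 0) ^ 2 + ∑ j ∈ Finset.range n, (f (j + 1) - g (j + 1)) ^ 2 := by
        rw [Finset.sum_range_succ']; ring
      rw [hrhs]
      nlinarith [hU, hIH, sq_nonneg (a - b)]

theorem stmt4 (d : ℕ) (hd : 2 ≤ d)
    (φ ψ : EuclideanSpace ℝ (Fin (d - 1)))
    (hφ : inHyperDomain d φ) (hψ : inHyperDomain d ψ) :
    ‖hyperS d φ - hyperS d ψ‖ ≤ ‖φ - ψ‖ := by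
  have hd1 : d - 1 + 1 = d := by omega
  have hS : ∀ χ : EuclideanSpace ℝ (Fin (d - 1)), ∀ i : Fin d,
      hyperS d χ i = sphT (d - 1) (angleExt d χ) i := by
    intro χ i
    rfl
  have hnorm1 : ‖hyperS d φ - hyperS d ψ‖ ^ 2 =
      ∑ i ∈ Finset.range d, (sphT (d - 1) (angleExt d φ) i - sphT (d - 1) (angleExt d ψ) i) ^ 2 := by
    rw [← Real.sq_sqrt (Finset.sum_nonneg fun i _ => sq_nonneg _)]
    congr 1
    rw [EuclideanSpace.norm_eq]
    congr 1
    rw [← Fin.sum_univ_eq_sum_range]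
    refine Finset.sum_congr rfl fun i _ => ?_
    rw [show (hyperS d φ - hyperS d ψ) i = hyperS d φ i - hyperS d ψ i from rfl, hS, hS,
      Real.norm_eq_abs, sq_abs]
  have hnorm2 : ‖φ - ψ‖ ^ 2 =
      ∑ j ∈ Finset.range (d - 1), (angleExt d φ j - angleExt d ψ j) ^ 2 := by
    rw [← Real.sq_sqrt (Finset.sum_nonneg fun i _ => sq_nonneg _)]
    congr 1
    rw [EuclideanSpace.norm_eq]
    congr 1
    rw [← Fin.sum_univ_eq_sum_range fun j => (angleExt d φ j - angleExt d ψ j) ^ 2]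
    refine Finset.sum_congr rfl fun i _ => ?_
    rw [show (φ - ψ) i = φ i - ψ i from rfl, Real.norm_eq_abs, sq_abs]
    congr 1 <;> simp [angleExt, i.isLt]
  have key := sphT_lip (d - 1) (angleExt d φ) (angleExt d ψ)
  rw [hd1] at key
  have : ‖hyperS d φ - hyperS d ψ‖ ^ 2 ≤ ‖φ - ψ‖ ^ 2 := by
    rw [hnorm1, hnorm2]; exact key
  have h := Real.sqrt_le_sqrt this
  rwa [Real.sqrt_sq (norm_nonneg _), Real.sqrt_sq (norm_nonneg _)] at h
end

section
/- Let d ≥ 2 and let S : ℝ^{d−1} → ℝ^d be the hyperspherical coordinate map. Then for all φ, φ̂ ∈ ℝ^{d−1} one has the identity |S(φ) − S(φ̂)|² = 4·Σ_{i=1}^{d−1} (∏_{j=1}^{i−1} sin φⱼ · sin φ̂ⱼ) · sin²((φᵢ − φ̂ᵢ)/2), where |·| denotes the Euclidean norm on ℝ^d. -/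
open Real

lemma sin_sq_half' (x : ℝ) : Real.sin (x / 2) ^ 2 = (1 - Real.cos x) / 2 := by
  have h := Real.sin_sq_eq_half_sub (x / 2)
  rw [mul_div_cancel₀ x (two_ne_zero)] at h
  linarith

lemma key_tel (f g : ℕ → ℝ) (n : ℕ) :
    (∑ i ∈ Finset.range n,
      ((∏ j ∈ Finset.range i, Real.sin (f j)) * Real.cos (f i)
        - (∏ j ∈ Finset.range i, Real.sin (g j)) * Real.cos (g i)) ^ 2)
    + ((∏ j ∈ Finset.range n, Real.sin (f j)) - ∏ j ∈ Finset.range n, Real.sin (g j)) ^ 2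
    = 4 * ∑ i ∈ Finset.range n,
        (∏ j ∈ Finset.range i, (Real.sin (f j) * Real.sin (g j))) *
          Real.sin ((f i - g i) / 2) ^ 2 := by
  induction n with
  | zero => simp
  | succ n ih =>
    rw [Finset.sum_range_succ, Finset.sum_range_succ, Finset.prod_range_succ,
      Finset.prod_range_succ]
    set A := ∏ j ∈ Finset.range n, Real.sin (f j) with hA
    set B := ∏ j ∈ Finset.range n, Real.sin (g j) with hB
    have hAB : (∏ j ∈ Finset.range n, (Real.sin (f j) * Real.sin (g j))) = A * B :=
      Finset.prod_mul_distrib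
    have key : (A * Real.cos (f n) - B * Real.cos (g n)) ^ 2
        + (A * Real.sin (f n) - B * Real.sin (g n)) ^ 2
        = (A - B) ^ 2 + 4 * (A * B) * Real.sin ((f n - g n) / 2) ^ 2 := by
      have h1 := Real.sin_sq_add_cos_sq (f n)
      have h2 := Real.sin_sq_add_cos_sq (g n)
      rw [sin_sq_half', Real.cos_sub]
      ring_nf
      nlinarith [h1, h2]
    rw [hAB]
    linear_combination ih + key

/-- The trigonometric identity for the hyperspherical coordinate map:
`|S(φ) - S(φ̂)|² = 4 ∑_{i<d-1} (∏_{j<i} sin φⱼ sin φ̂ⱼ) sin²((φᵢ - φ̂ᵢ)/2)`. -/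
theorem stmt5 (d : ℕ) (hd : 2 ≤ d) (φ ψ : EuclideanSpace ℝ (Fin (d - 1))) :
    ‖hyperS d φ - hyperS d ψ‖ ^ 2 =
      4 * ∑ i ∈ Finset.range (d - 1),
        (∏ j ∈ Finset.range i, Real.sin (angleExt d φ j) * Real.sin (angleExt d ψ j)) *
          Real.sin ((angleExt d φ i - angleExt d ψ i) / 2) ^ 2 := by
  set f := angleExt d φ
  set g := angleExt d ψ
  set F : ℕ → ℝ := fun k =>
    ((if k < d - 1 then
        (∏ j ∈ Finset.range k, Real.sin (f j)) * Real.cos (f k)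
      else ∏ j ∈ Finset.range (d - 1), Real.sin (f j))
    - (if k < d - 1 then
        (∏ j ∈ Finset.range k, Real.sin (g j)) * Real.cos (g k)
      else ∏ j ∈ Finset.range (d - 1), Real.sin (g j))) ^ 2 with hF
  have hnorm : ‖hyperS d φ - hyperS d ψ‖ ^ 2 = ∑ i : Fin d, F (i : ℕ) := by
    rw [EuclideanSpace.norm_eq, Real.sq_sqrt (by positivity)]
    refine Finset.sum_congr rfl fun i _ => ?_
    rw [Real.norm_eq_abs, sq_abs]
    rfl
  rw [hnorm, Fin.sum_univ_eq_sum_range F d]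
  have hd1 : d = (d - 1) + 1 := (Nat.succ_pred_eq_of_pos (by omega)).symm
  rw [hd1, Finset.sum_range_succ]
  have hlast : F (d - 1) =
      ((∏ j ∈ Finset.range (d - 1), Real.sin (f j))
        - ∏ j ∈ Finset.range (d - 1), Real.sin (g j)) ^ 2 := by
    simp [hF]
  have hrest : ∑ i ∈ Finset.range (d - 1), F i =
      ∑ i ∈ Finset.range (d - 1),
        ((∏ j ∈ Finset.range i, Real.sin (f j)) * Real.cos (f i)
          - (∏ j ∈ Finset.range i, Real.sin (g j)) * Real.cos (g i)) ^ 2 := by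
    refine Finset.sum_congr rfl fun i hi => ?_
    rw [Finset.mem_range] at hi
    simp [hF, hi]
  rw [hlast, hrest]
  exact key_tel f g (d - 1)
end

section
/- Let d ≥ 2, k ≥ 1 an integer, and σ_k(t) = max(0,t)^k. For all φ, φ̂ ∈ [0,π]^{d−2} × [0,2π) and all b, b̂ ∈ [−√d, √d], one has ∫_{(0,1)^d} |σ_k(S(φ)·x + b) − σ_k(S(φ̂)·x + b̂)|² dx ≤ k²·(4d)^{k−1}·(d/3 + 1)·(|φ − φ̂|² + (b − b̂)²), where S is the hyperspherical coordinate map and |·| denotes Euclidean norms. Consequently, the parametrization map P(φ,b)(x) = σ_k(S(φ)·x + b), viewed as a map into L²((0,1)^d), is Lipschitz with modulus at most k·(2√d)^{k−1}·√(d/3 + 1). -/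
open Real

/-!
On the unit cube every point has norm at most `√d` and `|b|, |c| ≤ √d`, so both ridge arguments
`S(φ)·x + b` lie in `[-2√d, 2√d]`, where `t ↦ max 0 t ^ k` is `k (2√d)^(k-1)`-Lipschitz.
The difference of the arguments is `(S(φ) - S(ψ))·x + (b - c)`, whose square Cauchy–Schwarz in one
more dimension bounds by `(‖S(φ) - S(ψ)‖² + (b - c)²)(‖x‖² + 1)`. The map `S` is `1`-Lipschitz:
adding one angle replaces the last coordinate `P` by the pair `(P cos θ, P sin θ)`, which moves the
squared distance by at most `(θ - θ')²` since `2PQ(1 - cos(θ - θ')) ≤ (θ - θ')²` when `PQ ≤ 1`.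
Finally `∫_{(0,1)^d} (‖x‖² + 1) dx = d/3 + 1`.
-/

section SphericalCoordinates

open Finset

lemma sq_mul_cos_sub_add_sq_mul_sin_sub_le {P Q x y : ℝ} (hPQ : P * Q ≤ 1) :
    (P * cos x - Q * cos y) ^ 2 + (P * sin x - Q * sin y) ^ 2 ≤ (P - Q) ^ 2 + (x - y) ^ 2 := by
  have hcos : 1 - (x - y) ^ 2 / 2 ≤ cos (x - y) := one_sub_sq_div_two_le_cos
  have hexpand : (P * cos x - Q * cos y) ^ 2 + (P * sin x - Q * sin y) ^ 2
      = (P - Q) ^ 2 + 2 * (P * Q) * (1 - cos (x - y)) := by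
    rw [cos_sub]
    linear_combination P ^ 2 * sin_sq_add_cos_sq x + Q ^ 2 * sin_sq_add_cos_sq y
  have hPQ' : P * Q * (1 - cos (x - y)) ≤ 1 * (1 - cos (x - y)) :=
    mul_le_mul_of_nonneg_right hPQ (sub_nonneg.2 (cos_le_one _))
  linarith

noncomputable def sphCoord (a : ℕ → ℝ) (n i : ℕ) : ℝ :=
  if i < n then (∏ j ∈ range i, sin (a j)) * cos (a i) else ∏ j ∈ range n, sin (a j)

variable (a b : ℕ → ℝ) {n i : ℕ}

lemma sphCoord_succ_of_lt (h : i < n) : sphCoord a (n + 1) i = sphCoord a n i := by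
  simp [sphCoord, h, h.trans (Nat.lt_succ_self n)]

lemma sphCoord_succ_self : sphCoord a (n + 1) n = (∏ j ∈ range n, sin (a j)) * cos (a n) := by
  simp [sphCoord]

lemma sphCoord_succ_succ :
    sphCoord a (n + 1) (n + 1) = (∏ j ∈ range n, sin (a j)) * sin (a n) := by
  simp [sphCoord, prod_range_succ]

lemma sphCoord_self : sphCoord a n n = ∏ j ∈ range n, sin (a j) := by
  simp [sphCoord]

lemma abs_prod_sin_le_one (n : ℕ) : |∏ j ∈ range n, sin (a j)| ≤ 1 := by
  rw [abs_prod]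
  exact prod_le_one (fun _ _ => abs_nonneg _) fun _ _ => abs_sin_le_one _

variable (n) in
lemma sum_sphCoord_sq : ∑ i ∈ range (n + 1), sphCoord a n i ^ 2 = 1 := by
  induction n with
  | zero => simp [sphCoord]
  | succ n ih =>
    rw [sum_range_succ, sphCoord_self] at ih
    rw [sum_range_succ, sum_range_succ, sphCoord_succ_self, sphCoord_succ_succ,
      sum_congr rfl fun i hi => by rw [sphCoord_succ_of_lt a (mem_range.1 hi)]]
    linear_combination ih + (∏ j ∈ range n, sin (a j)) ^ 2 * sin_sq_add_cos_sq (a n)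

variable (n) in
lemma sum_sphCoord_sub_sq_le :
    ∑ i ∈ range (n + 1), (sphCoord a n i - sphCoord b n i) ^ 2
      ≤ ∑ i ∈ range n, (a i - b i) ^ 2 := by
  induction n with
  | zero => simp [sphCoord]
  | succ n ih =>
    rw [sum_range_succ, sphCoord_self, sphCoord_self] at ih
    rw [sum_range_succ, sum_range_succ, sum_range_succ, sphCoord_succ_self, sphCoord_succ_self,
      sphCoord_succ_succ, sphCoord_succ_succ,
      sum_congr rfl fun i hi => by
        rw [sphCoord_succ_of_lt a (mem_range.1 hi), sphCoord_succ_of_lt b (mem_range.1 hi)]]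
    have hPQ : (∏ j ∈ range n, sin (a j)) * ∏ j ∈ range n, sin (b j) ≤ 1 := by
      calc _ ≤ |(∏ j ∈ range n, sin (a j)) * ∏ j ∈ range n, sin (b j)| := le_abs_self _
        _ ≤ 1 := by
          rw [abs_mul]
          exact mul_le_one₀ (abs_prod_sin_le_one a n) (abs_nonneg _) (abs_prod_sin_le_one b n)
    have := sq_mul_cos_sub_add_sq_mul_sin_sub_le (x := a n) (y := b n) hPQ
    linarith

lemma hyperS_apply (d : ℕ) (φ : EuclideanSpace ℝ (Fin (d - 1))) (i : Fin d) :
    hyperS d φ i = sphCoord (angleExt d φ) (d - 1) i := rfl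

lemma norm_hyperS {d : ℕ} (hd : 1 ≤ d) (φ : EuclideanSpace ℝ (Fin (d - 1))) :
    ‖hyperS d φ‖ = 1 := by
  have h := sum_sphCoord_sq (angleExt d φ) (d - 1)
  rw [Nat.sub_add_cancel hd, ← Fin.sum_univ_eq_sum_range] at h
  rw [← pow_left_inj₀ (norm_nonneg _) zero_le_one two_ne_zero, one_pow,
    EuclideanSpace.real_norm_sq_eq]
  exact h

lemma norm_hyperS_sub_le {d : ℕ} (hd : 1 ≤ d) (φ ψ : EuclideanSpace ℝ (Fin (d - 1))) :
    ‖hyperS d φ - hyperS d ψ‖ ≤ ‖φ - ψ‖ := by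
  have h := sum_sphCoord_sub_sq_le (angleExt d φ) (angleExt d ψ) (d - 1)
  rw [Nat.sub_add_cancel hd,
    ← Fin.sum_univ_eq_sum_range fun i => (sphCoord (angleExt d φ) (d - 1) i
      - sphCoord (angleExt d ψ) (d - 1) i) ^ 2,
    ← Fin.sum_univ_eq_sum_range fun i => (angleExt d φ i - angleExt d ψ i) ^ 2] at h
  rw [← pow_le_pow_iff_left₀ (norm_nonneg _) (norm_nonneg _) two_ne_zero,
    EuclideanSpace.real_norm_sq_eq, EuclideanSpace.real_norm_sq_eq]
  simpa [hyperS_apply, angleExt] using h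

end SphericalCoordinates

lemma sq_max_zero_pow_sub_max_zero_pow_le (k : ℕ) {M u v : ℝ} (hu : |u| ≤ M) (hv : |v| ≤ M) :
    (max 0 u ^ k - max 0 v ^ k) ^ 2 ≤ k ^ 2 * (M ^ 2) ^ (k - 1) * (u - v) ^ 2 := by
  have hM : 0 ≤ M := (abs_nonneg u).trans hu
  have hsub : |max 0 u - max 0 v| ≤ |u - v| := by
    rw [max_comm 0 u, max_comm 0 v]
    exact abs_max_sub_max_le_abs u v 0
  have hmax : max |max 0 u| |max 0 v| ≤ M := by
    rw [abs_of_nonneg (le_max_left 0 u), abs_of_nonneg (le_max_left 0 v)]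
    exact max_le (max_le hM ((le_abs_self u).trans hu)) (max_le hM ((le_abs_self v).trans hv))
  have hlip : |max 0 u ^ k - max 0 v ^ k| ≤ |u - v| * k * M ^ (k - 1) :=
    (abs_pow_sub_pow_le _ _ k).trans (by gcongr)
  calc (max 0 u ^ k - max 0 v ^ k) ^ 2 = |max 0 u ^ k - max 0 v ^ k| ^ 2 := (sq_abs _).symm
    _ ≤ (|u - v| * k * M ^ (k - 1)) ^ 2 := by gcongr
    _ = k ^ 2 * (M ^ 2) ^ (k - 1) * (u - v) ^ 2 := by
        rw [mul_pow, mul_pow, sq_abs, ← pow_mul, ← pow_mul, mul_comm 2]; ring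

section InnerProductSpace

variable {E : Type*} [NormedAddCommGroup E] [InnerProductSpace ℝ E]

open scoped RealInnerProductSpace

lemma sq_inner_add_le (w x : E) (β : ℝ) :
    (⟪w, x⟫ + β) ^ 2 ≤ (‖w‖ ^ 2 + β ^ 2) * (‖x‖ ^ 2 + 1) := by
  have hcs := abs_real_inner_le_norm w x
  have hsq : ⟪w, x⟫ ^ 2 ≤ (‖w‖ * ‖x‖) ^ 2 := sq_le_sq' (abs_le.1 hcs).1 (abs_le.1 hcs).2
  have hmul : ⟪w, x⟫ * β ≤ ‖w‖ * ‖x‖ * |β| :=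
    calc ⟪w, x⟫ * β ≤ |⟪w, x⟫| * |β| := (le_abs_self _).trans (abs_mul _ _).le
      _ ≤ ‖w‖ * ‖x‖ * |β| := by gcongr
  nlinarith [sq_nonneg (‖w‖ - |β| * ‖x‖), sq_abs β]

lemma sq_ridge_sub_le (k : ℕ) {s t x : E} {b c r : ℝ} (hs : ‖s‖ ≤ 1) (ht : ‖t‖ ≤ 1)
    (hx : ‖x‖ ≤ r) (hb : |b| ≤ r) (hc : |c| ≤ r) :
    (max 0 (⟪s, x⟫ + b) ^ k - max 0 (⟪t, x⟫ + c) ^ k) ^ 2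
      ≤ k ^ 2 * (4 * r ^ 2) ^ (k - 1) * (‖s - t‖ ^ 2 + (b - c) ^ 2) * (‖x‖ ^ 2 + 1) := by
  have hbound : ∀ (w : E) (β : ℝ), ‖w‖ ≤ 1 → |β| ≤ r → |⟪w, x⟫ + β| ≤ 2 * r := fun w β hw hβ =>
    calc |⟪w, x⟫ + β| ≤ ‖w‖ * ‖x‖ + |β| := by
          grw [abs_add_le, abs_real_inner_le_norm]
      _ ≤ 1 * r + r := by gcongr
      _ = 2 * r := by ring
  have hdiff : ⟪s, x⟫ + b - (⟪t, x⟫ + c) = ⟪s - t, x⟫ + (b - c) := by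
    rw [inner_sub_left]; ring
  calc _ ≤ k ^ 2 * ((2 * r) ^ 2) ^ (k - 1) * (⟪s, x⟫ + b - (⟪t, x⟫ + c)) ^ 2 :=
        sq_max_zero_pow_sub_max_zero_pow_le k (hbound s b hs hb) (hbound t c ht hc)
    _ ≤ k ^ 2 * (4 * r ^ 2) ^ (k - 1) * ((‖s - t‖ ^ 2 + (b - c) ^ 2) * (‖x‖ ^ 2 + 1)) := by
        rw [hdiff, mul_pow, show (2 : ℝ) ^ 2 = 4 by norm_num]
        gcongr
        exact sq_inner_add_le _ _ _
    _ = _ := by ring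

end InnerProductSpace

section UnitCube

open MeasureTheory Set

def unitCube (ι : Type*) [Fintype ι] : Set (EuclideanSpace ℝ ι) := {x | ∀ i, x i ∈ Ioo 0 1}

variable {ι : Type*} [Fintype ι]

lemma unitCube_eq_preimage :
    unitCube ι = WithLp.ofLp ⁻¹' univ.pi fun _ => Ioo (0 : ℝ) 1 := by
  ext x
  simp [unitCube]

lemma measurableSet_unitCube : MeasurableSet (unitCube ι) := by
  rw [unitCube_eq_preimage]
  exact (MeasurableSet.univ_pi fun _ => measurableSet_Ioo).preimage (by fun_prop)

lemma norm_sq_le_card_of_mem_unitCube {x : EuclideanSpace ℝ ι} (hx : x ∈ unitCube ι) :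
    ‖x‖ ^ 2 ≤ Fintype.card ι := by
  rw [EuclideanSpace.real_norm_sq_eq, ← Finset.card_univ, ← nsmul_one, ← Finset.sum_const]
  exact Finset.sum_le_sum fun i _ => by nlinarith [(hx i).1, (hx i).2]

lemma norm_le_sqrt_card_of_mem_unitCube {x : EuclideanSpace ℝ ι} (hx : x ∈ unitCube ι) :
    ‖x‖ ≤ √(Fintype.card ι) :=
  Real.le_sqrt_of_sq_le (norm_sq_le_card_of_mem_unitCube hx)

lemma setIntegral_unitCube_comp_ofLp (f : (ι → ℝ) → ℝ) :
    ∫ x in unitCube ι, f x.ofLp = ∫ y, f y ∂Measure.pi fun _ => volume.restrict (Ioo 0 1) := by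
  rw [unitCube_eq_preimage, (PiLp.volume_preserving_ofLp ι).setIntegral_preimage_emb
    (MeasurableEquiv.toLp 2 (ι → ℝ)).symm.measurableEmbedding, volume_pi, Measure.restrict_pi_pi]

lemma _root_.Continuous.integrableOn_unitCube {f : EuclideanSpace ℝ ι → ℝ} (hf : Continuous f) :
    IntegrableOn f (unitCube ι) :=
  (hf.continuousOn.integrableOn_compact (isCompact_closedBall 0 _)).mono_set fun _ hx =>
    mem_closedBall_zero_iff.2 (norm_le_sqrt_card_of_mem_unitCube hx)

lemma integral_unitCube_apply_sq (i : ι) : ∫ x in unitCube ι, x i ^ 2 = 1 / 3 := by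
  have : IsProbabilityMeasure (volume.restrict (Ioo (0 : ℝ) 1)) := ⟨by simp⟩
  rw [setIntegral_unitCube_comp_ofLp fun y => y i ^ 2]
  refine (integral_comp_eval (μ := fun _ => volume.restrict (Ioo (0 : ℝ) 1)) (i := i)
    (f := fun t : ℝ => t ^ 2) (by fun_prop)).trans ?_
  rw [← integral_Ioc_eq_integral_Ioo, ← intervalIntegral.integral_of_le zero_le_one, integral_pow]
  norm_num

lemma volume_unitCube : volume (unitCube ι) = 1 := by
  rw [unitCube_eq_preimage, (PiLp.volume_preserving_ofLp ι).measure_preimage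
    (MeasurableSet.univ_pi fun _ => measurableSet_Ioo).nullMeasurableSet, volume_pi_pi]
  simp

lemma integral_unitCube_norm_sq_add_one :
    ∫ x in unitCube ι, (‖x‖ ^ 2 + 1) = (Fintype.card ι : ℝ) / 3 + 1 := by
  have hsq : ∀ i, IntegrableOn (fun x : EuclideanSpace ℝ ι => x i ^ 2) (unitCube ι) :=
    fun i => Continuous.integrableOn_unitCube (by fun_prop)
  simp_rw [EuclideanSpace.real_norm_sq_eq]
  rw [integral_add (integrable_finsetSum _ fun i _ => hsq i) continuous_const.integrableOn_unitCube,
    integral_finsetSum _ fun i _ => hsq i,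
    Finset.sum_congr rfl fun i _ => integral_unitCube_apply_sq i, setIntegral_const,
    measureReal_def, volume_unitCube]
  simp [div_eq_mul_inv]

open scoped RealInnerProductSpace in
lemma integral_unitCube_sq_ridge_sub_le (k : ℕ) {s t : EuclideanSpace ℝ ι} {b c : ℝ}
    (hs : ‖s‖ ≤ 1) (ht : ‖t‖ ≤ 1) (hb : |b| ≤ √(Fintype.card ι)) (hc : |c| ≤ √(Fintype.card ι)) :
    ∫ x in unitCube ι, (max 0 (⟪s, x⟫ + b) ^ k - max 0 (⟪t, x⟫ + c) ^ k) ^ 2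
      ≤ k ^ 2 * (4 * Fintype.card ι) ^ (k - 1) * ((Fintype.card ι : ℝ) / 3 + 1)
          * (‖s - t‖ ^ 2 + (b - c) ^ 2) := by
  set A := (k : ℝ) ^ 2 * (4 * Fintype.card ι) ^ (k - 1) * (‖s - t‖ ^ 2 + (b - c) ^ 2)
  have hpoint : ∀ x ∈ unitCube ι,
      (max 0 (⟪s, x⟫ + b) ^ k - max 0 (⟪t, x⟫ + c) ^ k) ^ 2 ≤ A * (‖x‖ ^ 2 + 1) := fun x hx => by
    simpa only [sq_sqrt (Nat.cast_nonneg _)] using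
      sq_ridge_sub_le k hs ht (norm_le_sqrt_card_of_mem_unitCube hx) hb hc
  calc _ ≤ ∫ x in unitCube ι, A * (‖x‖ ^ 2 + 1) :=
        integral_mono_of_nonneg (ae_of_all _ fun _ => sq_nonneg _)
          (Continuous.integrableOn_unitCube (by fun_prop))
          ((ae_restrict_mem measurableSet_unitCube).mono hpoint)
    _ = _ := by
        rw [integral_const_mul, integral_unitCube_norm_sq_add_one]
        ring

end UnitCube

open MeasureTheory in
theorem stmt6_general (d k : ℕ) (hd : 2 ≤ d)
    (φ ψ : EuclideanSpace ℝ (Fin (d - 1)))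
    (b c : ℝ) (hb : b ∈ Set.Icc (-Real.sqrt d) (Real.sqrt d))
    (hc : c ∈ Set.Icc (-Real.sqrt d) (Real.sqrt d)) :
    (∫ x in {x : EuclideanSpace ℝ (Fin d) | ∀ i, x i ∈ Set.Ioo (0 : ℝ) 1},
        (max 0 ((∑ i, hyperS d φ i * x i) + b) ^ k
          - max 0 ((∑ i, hyperS d ψ i * x i) + c) ^ k) ^ 2)
      ≤ (k : ℝ) ^ 2 * (4 * d) ^ (k - 1) * ((d : ℝ) / 3 + 1) * (‖φ - ψ‖ ^ 2 + (b - c) ^ 2)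
    ∧
    Real.sqrt (∫ x in {x : EuclideanSpace ℝ (Fin d) | ∀ i, x i ∈ Set.Ioo (0 : ℝ) 1},
        (max 0 ((∑ i, hyperS d φ i * x i) + b) ^ k
          - max 0 ((∑ i, hyperS d ψ i * x i) + c) ^ k) ^ 2)
      ≤ (k : ℝ) * (2 * Real.sqrt d) ^ (k - 1) * Real.sqrt ((d : ℝ) / 3 + 1) *
          Real.sqrt (‖φ - ψ‖ ^ 2 + (b - c) ^ 2) := by
  have hd1 : 1 ≤ d := by omega
  have hinner : ∀ (s x : EuclideanSpace ℝ (Fin d)), ∑ i, s i * x i = inner ℝ s x := fun s x => by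
    simp [PiLp.inner_apply, mul_comm]
  have hbound := integral_unitCube_sq_ridge_sub_le k (norm_hyperS hd1 φ).le (norm_hyperS hd1 ψ).le
    (by simpa using abs_le.2 hb) (by simpa using abs_le.2 hc)
  simp only [Fintype.card_fin] at hbound
  have hint : (∫ x in {x : EuclideanSpace ℝ (Fin d) | ∀ i, x i ∈ Set.Ioo (0 : ℝ) 1},
      (max 0 ((∑ i, hyperS d φ i * x i) + b) ^ k
        - max 0 ((∑ i, hyperS d ψ i * x i) + c) ^ k) ^ 2)
      ≤ (k : ℝ) ^ 2 * (4 * d) ^ (k - 1) * ((d : ℝ) / 3 + 1) * (‖φ - ψ‖ ^ 2 + (b - c) ^ 2) := by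
    simp only [hinner]
    refine hbound.trans ?_
    gcongr
    exact norm_hyperS_sub_le hd1 φ ψ
  have hconst : √((k : ℝ) ^ 2 * (4 * d) ^ (k - 1) * ((d : ℝ) / 3 + 1))
      = k * (2 * √d) ^ (k - 1) * √((d : ℝ) / 3 + 1) := by
    rw [show (4 : ℝ) * d = (2 * √d) ^ 2 by rw [mul_pow, sq_sqrt (Nat.cast_nonneg d)]; norm_num,
      ← pow_mul, mul_comm 2 (k - 1), pow_mul, ← mul_pow, sqrt_mul' _ (by positivity),
      sqrt_sq (by positivity)]
  refine ⟨hint, (sqrt_le_sqrt hint).trans_eq ?_⟩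
  rw [sqrt_mul (by positivity), hconst]

open MeasureTheory in
/-- Lipschitz estimate for the dictionary parametrization
`P(φ,b)(x) = σ_k(S(φ)·x + b)` into `L²((0,1)^d)` (Remark 4.3):
the squared `L²` distance is bounded by `k²(4d)^{k-1}(d/3+1)(|φ-φ̂|² + (b-b̂)²)`,
and consequently `P` is Lipschitz with modulus at most `k(2√d)^{k-1}√(d/3+1)`. -/
theorem stmt6 (d k : ℕ) (hd : 2 ≤ d) (hk : 1 ≤ k)
    (φ ψ : EuclideanSpace ℝ (Fin (d - 1)))
    (hφ : inHyperDomain d φ) (hψ : inHyperDomain d ψ)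
    (b c : ℝ) (hb : b ∈ Set.Icc (-Real.sqrt d) (Real.sqrt d))
    (hc : c ∈ Set.Icc (-Real.sqrt d) (Real.sqrt d)) :
    (∫ x in {x : EuclideanSpace ℝ (Fin d) | ∀ i, x i ∈ Set.Ioo (0 : ℝ) 1},
        (max 0 ((∑ i, hyperS d φ i * x i) + b) ^ k
          - max 0 ((∑ i, hyperS d ψ i * x i) + c) ^ k) ^ 2)
      ≤ (k : ℝ) ^ 2 * (4 * d) ^ (k - 1) * ((d : ℝ) / 3 + 1) * (‖φ - ψ‖ ^ 2 + (b - c) ^ 2)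
    ∧
    Real.sqrt (∫ x in {x : EuclideanSpace ℝ (Fin d) | ∀ i, x i ∈ Set.Ioo (0 : ℝ) 1},
        (max 0 ((∑ i, hyperS d φ i * x i) + b) ^ k
          - max 0 ((∑ i, hyperS d ψ i * x i) + c) ^ k) ^ 2)
      ≤ (k : ℝ) * (2 * Real.sqrt d) ^ (k - 1) * Real.sqrt ((d : ℝ) / 3 + 1) *
          Real.sqrt (‖φ - ψ‖ ^ 2 + (b - c) ^ 2) :=
  stmt6_general d k hd φ ψ b c hb hc
end

section
/- Let H be a real Hilbert space, (R, dist) a metric space, P : R → H an L-Lipschitz map, and let D = P(R) ∪ (−P(R)) be the induced symmetric dictionary, assumed bounded in H. Let u ∈ K₁(D), γ ∈ (0,1), T > 0, and let G ⊆ R be an ε-net of R (for every θ ∈ R there exists θ' ∈ G with dist(θ, θ') ≤ ε), where L·ε·‖u‖_{K₁(D)} ≤ (1 − γ)·T. Let K ⊆ H be a closed subspace, let r = u − P_K u where P_K is the orthogonal projection onto K, and suppose the supremum sup_{g∈D} ⟨g, r⟩ is attained by some element of D. If ‖r‖ > T, then the discretized dictionary D_G = P(G) ∪ (−P(G)) contains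 an element g with ⟨g, r⟩ ≥ γ·sup_{g'∈D} ⟨g', r⟩; in particular, the greedy selection over D_G realizes a weak greedy step with parameter γ relative to the full dictionary D. -/
open RealInnerProductSpace Pointwise

/-- `BOne D` is the closure of the convex symmetric hull of the dictionary `D`:
the closure of the set of finite linear combinations `∑ aᵢ • gᵢ` with `gᵢ ∈ D`
and `∑ |aᵢ| ≤ 1`. -/
noncomputable def BOne {H : Type*} [NormedAddCommGroup H] [InnerProductSpace ℝ H]
    (D : Set H) : Set H :=
  closure {v : H | ∃ (n : ℕ) (a : Fin n → ℝ) (g : Fin n → H),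
    (∀ i, g i ∈ D) ∧ (∑ i, |a i|) ≤ 1 ∧ v = ∑ i, a i • g i}

/-- Membership in the variation space `K₁(D)`. -/
noncomputable def memK1 {H : Type*} [NormedAddCommGroup H] [InnerProductSpace ℝ H]
    (D : Set H) (v : H) : Prop :=
  ∃ c : ℝ, 0 < c ∧ v ∈ c • BOne D

/-- The variation norm `‖v‖_{K₁(D)} = inf {c > 0 : v ∈ c • B₁(D)}`. -/
noncomputable def varNorm {H : Type*} [NormedAddCommGroup H] [InnerProductSpace ℝ H]
    (D : Set H) (v : H) : ℝ :=
  sInf {c : ℝ | 0 < c ∧ v ∈ c • BOne D}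

/-!
Let `M = ⟪g₀, r⟫` be the maximum of `g ↦ ⟪g, r⟫` over `D`. By symmetry of `D`, `|⟪g, r⟫| ≤ M`
on `D`, hence `⟪v, r⟫ ≤ M` on `B₁(D)` and `⟪u, r⟫ ≤ ‖u‖_{K₁(D)} · M`. Since `r ⊥ K`,
`⟪u, r⟫ = ‖r‖²`, so `‖r‖² ≤ ‖u‖_{K₁(D)} · M`. The net provides `g ∈ D_G` with
`‖g - g₀‖ ≤ L ε`, and Cauchy–Schwarz gives `⟪g, r⟫ ≥ M - L ε ‖r‖`. Finally
`L ε ‖r‖² ≤ L ε ‖u‖_{K₁(D)} M ≤ (1 - γ) T M < (1 - γ) ‖r‖ M`, so `L ε ‖r‖ ≤ (1 - γ) M`.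
-/

section Dictionary

variable {H : Type*} [NormedAddCommGroup H] [InnerProductSpace ℝ H]

theorem abs_inner_le_of_forall_inner_le {D : Set H} (hsymm : ∀ g ∈ D, -g ∈ D) {r g₀ : H}
    (hmax : ∀ g ∈ D, ⟪g, r⟫ ≤ ⟪g₀, r⟫) : ∀ g ∈ D, |⟪g, r⟫| ≤ ⟪g₀, r⟫ := by
  intro g hg
  have hneg := hmax (-g) (hsymm g hg)
  rw [inner_neg_left] at hneg
  exact abs_le.2 ⟨by linarith, hmax g hg⟩

theorem inner_le_of_mem_BOne {D : Set H} {r : H} {M : ℝ} (hM : 0 ≤ M)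
    (hD : ∀ g ∈ D, |⟪g, r⟫| ≤ M) {v : H} (hv : v ∈ BOne D) : ⟪v, r⟫ ≤ M := by
  refine closure_minimal (t := {v | ⟪v, r⟫ ≤ M}) ?_ (isClosed_le (by fun_prop) continuous_const) hv
  rintro _ ⟨n, a, g, hgD, ha, rfl⟩
  show ⟪∑ i, a i • g i, r⟫ ≤ M
  rw [sum_inner]
  calc ∑ i, ⟪a i • g i, r⟫ ≤ ∑ i, |a i| * M := Finset.sum_le_sum fun i _ => by
        rw [real_inner_smul_left]
        calc a i * ⟪g i, r⟫ ≤ |a i * ⟪g i, r⟫| := le_abs_self _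
          _ ≤ |a i| * M := by rw [abs_mul]; gcongr; exact hD _ (hgD i)
    _ = (∑ i, |a i|) * M := (Finset.sum_mul ..).symm
    _ ≤ M := mul_le_of_le_one_left hM ha

theorem inner_le_varNorm_mul {D : Set H} {r : H} {M : ℝ} (hM : 0 ≤ M)
    (hD : ∀ g ∈ D, |⟪g, r⟫| ≤ M) {u : H} (hu : memK1 D u) : ⟪u, r⟫ ≤ varNorm D u * M := by
  have hscaled : ∀ c ∈ {c : ℝ | 0 < c ∧ u ∈ c • BOne D}, ⟪u, r⟫ ≤ c * M := by
    rintro c ⟨hc, v, hv, rfl⟩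
    rw [real_inner_smul_left]
    exact mul_le_mul_of_nonneg_left (inner_le_of_mem_BOne hM hD hv) hc.le
  obtain ⟨c₀, hc₀⟩ := hu
  rcases hM.eq_or_lt with rfl | hMpos
  · simpa using hscaled c₀ hc₀
  · rw [← div_le_iff₀ hMpos]
    exact le_csInf ⟨c₀, hc₀⟩ fun c hc => (div_le_iff₀ hMpos).2 (hscaled c hc)

theorem inner_self_sub_starProjection (K : Submodule ℝ H) [K.HasOrthogonalProjection] (u : H) :
    ⟪u, u - K.starProjection u⟫ = ‖u - K.starProjection u‖ ^ 2 := by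
  rw [← real_inner_self_eq_norm_sq, ← sub_eq_zero, ← inner_sub_left, sub_sub_cancel]
  exact K.sub_starProjection_mem_orthogonal u _ (K.starProjection_apply_mem u)

theorem mul_inner_le_inner_of_norm_sub_mul_le {g g₀ r : H} {γ : ℝ}
    (h : ‖g - g₀‖ * ‖r‖ ≤ (1 - γ) * ⟪g₀, r⟫) : γ * ⟪g₀, r⟫ ≤ ⟪g, r⟫ := by
  have hcs := real_inner_le_norm (g₀ - g) r
  rw [inner_sub_left, norm_sub_rev] at hcs
  linarith

end Dictionary

theorem exists_mem_image_net_norm_sub_le {E R : Type*} [SeminormedAddCommGroup E]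
    [PseudoMetricSpace R] (P : R → E) {L ε : ℝ} (hL : ∀ θ θ' : R, ‖P θ - P θ'‖ ≤ L * dist θ θ')
    {G : Set R} (hG : ∀ θ : R, ∃ θ' ∈ G, dist θ θ' ≤ ε) {g₀ : E}
    (hg₀ : g₀ ∈ Set.range P ∪ -Set.range P) :
    ∃ g ∈ P '' G ∪ -(P '' G), ‖g - g₀‖ ≤ max (L * ε) 0 := by
  have hnet : ∀ θ, ∃ θ' ∈ G, ‖P θ - P θ'‖ ≤ max (L * ε) 0 := by
    intro θ
    obtain ⟨θ', hθ', hdist⟩ := hG θ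
    refine ⟨θ', hθ', (hL θ θ').trans ?_⟩
    rcases le_total 0 L with hL₀ | hL₀
    · exact (mul_le_mul_of_nonneg_left hdist hL₀).trans (le_max_left _ _)
    · exact (mul_nonpos_of_nonpos_of_nonneg hL₀ dist_nonneg).trans (le_max_right _ _)
  rcases hg₀ with ⟨θ, rfl⟩ | hneg
  · obtain ⟨θ', hθ', hclose⟩ := hnet θ
    exact ⟨P θ', Or.inl ⟨θ', hθ', rfl⟩, by rwa [norm_sub_rev]⟩
  · obtain ⟨θ, hθ⟩ := Set.mem_neg.1 hneg
    obtain ⟨θ', hθ', hclose⟩ := hnet θ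
    refine ⟨-P θ', Or.inr (by simpa using ⟨θ', hθ', rfl⟩), ?_⟩
    rwa [← neg_neg g₀, ← hθ, neg_sub_neg]

theorem max_mul_le_of_sq_le_mul {x V M a T γ : ℝ} (hM : 0 ≤ M) (hγ : γ < 1) (hT : 0 < T)
    (hTx : T < x) (hx : x ^ 2 ≤ V * M) (ha : a * V ≤ (1 - γ) * T) :
    max a 0 * x ≤ (1 - γ) * M := by
  have hx₀ : 0 < x := hT.trans hTx
  rcases le_total a 0 with ha₀ | ha₀
  · rw [max_eq_right ha₀, zero_mul]
    nlinarith
  · rw [max_eq_left ha₀]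
    refine le_of_mul_le_mul_right ?_ hx₀
    calc a * x * x = a * x ^ 2 := by ring
      _ ≤ a * (V * M) := by gcongr
      _ = a * V * M := by ring
      _ ≤ (1 - γ) * T * M := by gcongr
      _ ≤ (1 - γ) * x * M := by gcongr
      _ = (1 - γ) * M * x := by ring

theorem stmt9_general {H : Type*} [NormedAddCommGroup H] [InnerProductSpace ℝ H]
    {R : Type*} [MetricSpace R]
    (P : R → H) (L : ℝ) (hL : ∀ θ θ' : R, ‖P θ - P θ'‖ ≤ L * dist θ θ')
    (D : Set H) (hD : D = Set.range P ∪ -Set.range P)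
    (u : H) (hu : memK1 D u)
    (γ T ε : ℝ) (hγ : γ ∈ Set.Ioo (0 : ℝ) 1) (hT : 0 < T)
    (G : Set R) (hG : ∀ θ : R, ∃ θ' ∈ G, dist θ θ' ≤ ε)
    (hε : L * ε * varNorm D u ≤ (1 - γ) * T)
    (K : Submodule ℝ H) [K.HasOrthogonalProjection]
    (r : H) (hr : r = u - (K.orthogonalProjectionOnto u : H))
    (hattain : ∃ g0 ∈ D, ∀ g ∈ D, ⟪g, r⟫ ≤ ⟪g0, r⟫)
    (hbig : T < ‖r‖) :
    ∃ g ∈ P '' G ∪ -(P '' G),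
      γ * sSup ((fun g' => ⟪g', r⟫) '' D) ≤ ⟪g, r⟫ := by
  obtain ⟨g₀, hg₀, hmax⟩ := hattain
  have hsymm : ∀ g ∈ D, -g ∈ D := by
    subst hD
    rintro g (hg | hg)
    exacts [Or.inr (by simpa using hg), Or.inl hg]
  have habs := abs_inner_le_of_forall_inner_le hsymm hmax
  have hM : 0 ≤ ⟪g₀, r⟫ := (abs_nonneg _).trans (habs g₀ hg₀)
  have hres : ‖r‖ ^ 2 ≤ varNorm D u * ⟪g₀, r⟫ :=
    calc ‖r‖ ^ 2 = ⟪u, r⟫ := by rw [hr]; exact (inner_self_sub_starProjection K u).symm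
      _ ≤ varNorm D u * ⟪g₀, r⟫ := inner_le_varNorm_mul hM habs hu
  have hsup : sSup ((fun g' => ⟪g', r⟫) '' D) = ⟪g₀, r⟫ :=
    IsGreatest.csSup_eq ⟨Set.mem_image_of_mem _ hg₀, Set.forall_mem_image.2 hmax⟩
  obtain ⟨g, hgG, hclose⟩ := exists_mem_image_net_norm_sub_le P hL hG (hD ▸ hg₀)
  refine ⟨g, hgG, hsup ▸ mul_inner_le_inner_of_norm_sub_mul_le ?_⟩
  calc ‖g - g₀‖ * ‖r‖ ≤ max (L * ε) 0 * ‖r‖ := by gcongr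
    _ ≤ (1 - γ) * ⟪g₀, r⟫ := max_mul_le_of_sq_le_mul hM hγ.2 hT hbig hres hε

/-- Core of Theorem 5.1: if `G` is a sufficiently fine `ε`-net of the parameter
space `R`, then as long as the residual norm exceeds the threshold `T`, the
discretized dictionary `P(G) ∪ (−P(G))` contains a weak greedy selection with
parameter `γ` relative to the full dictionary `D = P(R) ∪ (−P(R))`. -/
theorem stmt9 {H : Type*} [NormedAddCommGroup H] [InnerProductSpace ℝ H] [CompleteSpace H]
    {R : Type*} [MetricSpace R]
    (P : R → H) (L : ℝ) (hL : ∀ θ θ' : R, ‖P θ - P θ'‖ ≤ L * dist θ θ')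
    (D : Set H) (hD : D = Set.range P ∪ -Set.range P)
    (hbdd : ∃ C : ℝ, ∀ g ∈ D, ‖g‖ ≤ C)
    (u : H) (hu : memK1 D u)
    (γ T ε : ℝ) (hγ : γ ∈ Set.Ioo (0 : ℝ) 1) (hT : 0 < T)
    (G : Set R) (hG : ∀ θ : R, ∃ θ' ∈ G, dist θ θ' ≤ ε)
    (hε : L * ε * varNorm D u ≤ (1 - γ) * T)
    (K : Submodule ℝ H) [K.HasOrthogonalProjection]
    (r : H) (hr : r = u - (K.orthogonalProjectionOnto u : H))
    (hattain : ∃ g0 ∈ D, ∀ g ∈ D, ⟪g, r⟫ ≤ ⟪g0, r⟫)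
    (hbig : T < ‖r‖) :
    ∃ g ∈ P '' G ∪ -(P '' G),
      γ * sSup ((fun g' => ⟪g', r⟫) '' D) ≤ ⟪g, r⟫ :=
  stmt9_general P L hL D hD u hu γ T ε hγ hT G hG hε K r hr hattain hbig
end

section
/- Let H be a real Hilbert space, u ∈ H, and let K ⊆ K' be closed subspaces of H with orthogonal projections P_K and P_{K'}. Let g ∈ K' with g ∉ K, so that g − P_K g ≠ 0. Then ‖u − P_{K'} u‖² ≤ ‖u − P_K u‖² − ⟨u − P_K u, g − P_K g⟩² / ‖g − P_K g‖². -/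
open RealInnerProductSpace

/- The error of `P_{K'}` is at most the error of the point `P_K u + c (g - P_K g)` of `K'`
obtained by moving from `P_K u` along `g - P_K g` with the optimal step `c`; Pythagoras in the
direction `g - P_K g` shows that this point reduces the squared error by exactly
`⟨u - P_K u, g - P_K g⟩² / ‖g - P_K g‖²`. -/

theorem Submodule.norm_sub_orthogonalProjectionOnto_le {𝕜 E : Type*} [RCLike 𝕜]
    [NormedAddCommGroup E] [InnerProductSpace 𝕜 E] {U : Submodule 𝕜 E}
    [U.HasOrthogonalProjection] (y : E) {x : E} (hx : x ∈ U) :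
    ‖y - (U.orthogonalProjectionOnto y : E)‖ ≤ ‖y - x‖ := by
  rw [← Submodule.starProjection_apply, Submodule.starProjection_minimal]
  exact ciInf_le ⟨0, by rintro _ ⟨z, rfl⟩; positivity⟩ (⟨x, hx⟩ : U)

theorem norm_sub_inner_div_smul_sq {F : Type*} [NormedAddCommGroup F] [InnerProductSpace ℝ F]
    (r h : F) :
    ‖r - (⟪r, h⟫ / ‖h‖ ^ 2) • h‖ ^ 2 = ‖r‖ ^ 2 - ⟪r, h⟫ ^ 2 / ‖h‖ ^ 2 := by
  rcases eq_or_ne h 0 with rfl | hh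
  · simp
  have hh2 : ‖h‖ ^ 2 ≠ 0 := by positivity
  rw [norm_sub_sq_real, real_inner_smul_right, norm_smul, mul_pow, Real.norm_eq_abs, sq_abs]
  field_simp
  ring

theorem stmt14_general {H : Type*} [NormedAddCommGroup H] [InnerProductSpace ℝ H]
    (u : H) (K K' : Submodule ℝ H)
    [Submodule.HasOrthogonalProjection K] [Submodule.HasOrthogonalProjection K']
    (hKK' : K ≤ K') (g : H) (hgK' : g ∈ K') :
    ‖u - (K'.orthogonalProjectionOnto u : H)‖ ^ 2 ≤
      ‖u - (K.orthogonalProjectionOnto u : H)‖ ^ 2 -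
        ⟪u - (K.orthogonalProjectionOnto u : H), g - (K.orthogonalProjectionOnto g : H)⟫ ^ 2 /
          ‖g - (K.orthogonalProjectionOnto g : H)‖ ^ 2 := by
  set r : H := u - (K.orthogonalProjectionOnto u : H) with hr
  set h : H := g - (K.orthogonalProjectionOnto g : H)
  set c : ℝ := ⟪r, h⟫ / ‖h‖ ^ 2
  have hmem : (K.orthogonalProjectionOnto u : H) + c • h ∈ K' :=
    K'.add_mem (hKK' (Submodule.coe_mem _))
      (K'.smul_mem c (K'.sub_mem hgK' (hKK' (Submodule.coe_mem _))))
  have hstep : u - ((K.orthogonalProjectionOnto u : H) + c • h) = r - c • h := by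
    rw [hr]; abel
  calc ‖u - (K'.orthogonalProjectionOnto u : H)‖ ^ 2
      ≤ ‖r - c • h‖ ^ 2 := by
        rw [← hstep]; gcongr; exact Submodule.norm_sub_orthogonalProjectionOnto_le u hmem
    _ = ‖r‖ ^ 2 - ⟪r, h⟫ ^ 2 / ‖h‖ ^ 2 := norm_sub_inner_div_smul_sq r h

/-- Per-iteration error-reduction inequality of the orthogonal greedy algorithm:
for nested closed subspaces `K ≤ K'` and `g ∈ K'` with `g ∉ K`,
`‖u - P_{K'} u‖² ≤ ‖u - P_K u‖² - ⟨u - P_K u, g - P_K g⟩² / ‖g - P_K g‖²`. -/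
theorem stmt14 {H : Type*} [NormedAddCommGroup H] [InnerProductSpace ℝ H] [CompleteSpace H]
    (u : H) (K K' : Submodule ℝ H)
    [Submodule.HasOrthogonalProjection K] [Submodule.HasOrthogonalProjection K']
    (hKK' : K ≤ K') (g : H) (hgK' : g ∈ K') (hgK : g ∉ K) :
    ‖u - (K'.orthogonalProjectionOnto u : H)‖ ^ 2 ≤
      ‖u - (K.orthogonalProjectionOnto u : H)‖ ^ 2 -
        ⟪u - (K.orthogonalProjectionOnto u : H), g - (K.orthogonalProjectionOnto g : H)⟫ ^ 2 /
          ‖g - (K.orthogonalProjectionOnto g : H)‖ ^ 2 :=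
  stmt14_general u K K' hKK' g hgK'
end
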